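/- Let M be a loopless matroid on finite ground set E. Then Y_M(s) = Σ_{flags F} Π_{i=1}^{len(F)} ( -(|F_i|s + rk(F_{i-1})) / (|F_i|s + rk(F_i)) ), where the sum is over all flags ∅ = F₀ ⊊ F₁ ⊊ ... ⊊ F_k = E of flats of M. -/

import Mathlib

open scoped Classical
open Polynomial

/-- The unsigned Stirling number of the first kind `c(n,k)`: the number of
permutations of an `n`-element set with exactly `k` disjoint cycles
(fixed points count as cycles). -/
noncomputable def stirlingFirst (n k : ℕ) : ℕ :=
  (Finset.univ.filter fun σ : Equiv.Perm (Fin n) =>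
    Multiset.card σ.cycleType + (n - σ.support.card) = k).card

/-- The Stirling number of the second kind `S(n,k)`: the number of partitions of an
`n`-element set into exactly `k` nonempty parts. -/
noncomputable def stirlingSecond (n k : ℕ) : ℕ :=
  (Finset.univ.filter fun P : Finset (Finset (Fin n)) =>
    P.card = k ∧ ∅ ∉ P ∧ (P : Set (Finset (Fin n))).PairwiseDisjoint id ∧
      P.sup id = Finset.univ).card

/-- A matroid on a finite ground set `E`, presented by its rank function. -/
structure FinMatroid (α : Type*) [DecidableEq α] where
  E : Finset α
  rk : Finset α → ℕ
  rk_empty : rk ∅ = 0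
  rk_le_card : ∀ S : Finset α, rk S ≤ S.card
  rk_mono : ∀ ⦃S T : Finset α⦄, S ⊆ T → rk S ≤ rk T
  rk_submod : ∀ S T : Finset α, rk (S ∪ T) + rk (S ∩ T) ≤ rk S + rk T

namespace FinMatroid

variable {α : Type*} [DecidableEq α]

/-- A flat of a matroid: a subset of the ground set such that adding any new element
of the ground set increases the rank. -/
def IsFlat (M : FinMatroid α) (F : Finset α) : Prop :=
  F ⊆ M.E ∧ ∀ x ∈ M.E, x ∉ F → M.rk F < M.rk (insert x F)

/-- The lattice of flats `L(M)`, as a finset. -/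
noncomputable def flats (M : FinMatroid α) : Finset (Finset α) :=
  M.E.powerset.filter fun F => M.IsFlat F

/-- The proper flats, i.e. flats different from the ground set. -/
noncomputable def properFlats (M : FinMatroid α) : Finset (Finset α) :=
  M.flats.filter fun F => F ≠ M.E

/-- A matroid is loopless if every singleton of the ground set has rank one. -/
def Loopless (M : FinMatroid α) : Prop := ∀ x ∈ M.E, M.rk {x} = 1

/-- The restriction `M|F` of a matroid to a subset of its ground set. -/
def restrict (M : FinMatroid α) (F : Finset α) : FinMatroid α :=
  ⟨F, M.rk, M.rk_empty, M.rk_le_card, M.rk_mono, M.rk_submod⟩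

/-- The characteristic polynomial attached to a ground set and a rank function:
`χ(q) = ∑_{S ⊆ E} (-1)^{|S|} q^{rk E - rk S}`. -/
noncomputable def charPolyAux (E : Finset α) (rk : Finset α → ℕ) : Polynomial ℚ :=
  ∑ S ∈ E.powerset, (-1 : Polynomial ℚ) ^ S.card * X ^ (rk E - rk S)

/-- The characteristic polynomial `χ_M(q)` of a matroid. -/
noncomputable def charPoly (M : FinMatroid α) : Polynomial ℚ := charPolyAux M.E M.rk

/-- The characteristic polynomial `χ_{M/F}(q)` of the contraction of `M` at `F`. -/
noncomputable def contractCharPoly (M : FinMatroid α) (F : Finset α) : Polynomial ℚ :=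
  charPolyAux (M.E \ F) fun S => M.rk (S ∪ F) - M.rk F

/-- The reduced characteristic polynomial `χ̄(q) = χ(q)/(q-1)`. -/
noncomputable def reducedCharPoly (p : Polynomial ℚ) : Polynomial ℚ := p /ₘ (X - C 1)

/-- The value `χ̄_{M/F}(1)` of the reduced characteristic polynomial of `M/F` at `q = 1`. -/
noncomputable def redCharContractOne (M : FinMatroid α) (F : Finset α) : ℚ :=
  (reducedCharPoly (M.contractCharPoly F)).eval 1

/-- The truncation `tr(M)`, with rank function `S ↦ min (rk S) (rk M - 1)`. -/
def truncation (M : FinMatroid α) : FinMatroid α where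
  E := M.E
  rk S := min (M.rk S) (M.rk M.E - 1)
  rk_empty := by simp [M.rk_empty]
  rk_le_card S := le_trans (min_le_left _ _) (M.rk_le_card S)
  rk_mono S T h := min_le_min (M.rk_mono h) le_rfl
  rk_submod S T := by
    have h1 := M.rk_submod S T
    have h2 : M.rk S ≤ M.rk (S ∪ T) := M.rk_mono Finset.subset_union_left
    have h3 : M.rk T ≤ M.rk (S ∪ T) := M.rk_mono Finset.subset_union_right
    have h4 : M.rk (S ∩ T) ≤ M.rk S := M.rk_mono Finset.inter_subset_left
    simp only [Nat.min_def]
    split_ifs <;> omega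

/-- The direct sum `M₁ ⊕ M₂` of two matroids on disjoint ground sets. -/
def directSum (M₁ M₂ : FinMatroid α) (h : Disjoint M₁.E M₂.E) : FinMatroid α where
  E := M₁.E ∪ M₂.E
  rk S := M₁.rk (S ∩ M₁.E) + M₂.rk (S ∩ M₂.E)
  rk_empty := by simp [M₁.rk_empty, M₂.rk_empty]
  rk_le_card S := by
    have hd : Disjoint (S ∩ M₁.E) (S ∩ M₂.E) :=
      h.mono Finset.inter_subset_right Finset.inter_subset_right
    calc M₁.rk (S ∩ M₁.E) + M₂.rk (S ∩ M₂.E)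
        ≤ (S ∩ M₁.E).card + (S ∩ M₂.E).card :=
          add_le_add (M₁.rk_le_card _) (M₂.rk_le_card _)
      _ = ((S ∩ M₁.E) ∪ (S ∩ M₂.E)).card := (Finset.card_union_of_disjoint hd).symm
      _ ≤ S.card := Finset.card_le_card
          (Finset.union_subset Finset.inter_subset_left Finset.inter_subset_left)
  rk_mono S T hST :=
    add_le_add (M₁.rk_mono (Finset.inter_subset_inter hST subset_rfl))
      (M₂.rk_mono (Finset.inter_subset_inter hST subset_rfl))
  rk_submod S T := by
    have e1 : ∀ E' : Finset α, (S ∪ T) ∩ E' = (S ∩ E') ∪ (T ∩ E') := by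
      intro E'; ext x; simp only [Finset.mem_union, Finset.mem_inter]; tauto
    have e2 : ∀ E' : Finset α, (S ∩ T) ∩ E' = (S ∩ E') ∩ (T ∩ E') := by
      intro E'; ext x; simp only [Finset.mem_inter]; tauto
    simp only [e1, e2]
    have h1 := M₁.rk_submod (S ∩ M₁.E) (T ∩ M₁.E)
    have h2 := M₂.rk_submod (S ∩ M₂.E) (T ∩ M₂.E)
    omega

/-- The free matroid `U_{n,n}` on a ground set `E` with `|E| = n`. -/
def freeM (E : Finset α) : FinMatroid α where
  E := E
  rk S := (S ∩ E).card
  rk_empty := by simp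
  rk_le_card S := Finset.card_le_card Finset.inter_subset_left
  rk_mono S T h := Finset.card_le_card (Finset.inter_subset_inter h subset_rfl)
  rk_submod S T := by
    have e1 : (S ∪ T) ∩ E = (S ∩ E) ∪ (T ∩ E) := by
      ext x; simp only [Finset.mem_union, Finset.mem_inter]; tauto
    have e2 : (S ∩ T) ∩ E = (S ∩ E) ∩ (T ∩ E) := by
      ext x; simp only [Finset.mem_inter]; tauto
    simp only [e1, e2]
    exact (Finset.card_union_add_card_inter _ _).le

/-- The uniform matroid `U_{r,n}` on a ground set `E` with `|E| = n`. -/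
def uniformM (E : Finset α) (r : ℕ) : FinMatroid α where
  E := E
  rk S := min (S ∩ E).card r
  rk_empty := by simp
  rk_le_card S := le_trans (min_le_left _ _) (Finset.card_le_card Finset.inter_subset_left)
  rk_mono S T h := min_le_min (Finset.card_le_card (Finset.inter_subset_inter h subset_rfl)) le_rfl
  rk_submod S T := by
    have e1 : (S ∪ T) ∩ E = (S ∩ E) ∪ (T ∩ E) := by
      ext x; simp only [Finset.mem_union, Finset.mem_inter]; tauto
    have e2 : (S ∩ T) ∩ E = (S ∩ E) ∩ (T ∩ E) := by
      ext x; simp only [Finset.mem_inter]; tauto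
    have h3 := Finset.card_union_add_card_inter (S ∩ E) (T ∩ E)
    have h4 : (S ∩ E).card ≤ ((S ∩ E) ∪ (T ∩ E)).card :=
      Finset.card_le_card Finset.subset_union_left
    have h5 : (T ∩ E).card ≤ ((S ∩ E) ∪ (T ∩ E)).card :=
      Finset.card_le_card Finset.subset_union_right
    simp only [e1, e2, Nat.min_def]
    split_ifs <;> omega

/-- The closure `cl_M(S)` of a set in a matroid: all ground set elements whose
addition does not increase the rank. -/
def cl (M : FinMatroid α) (S : Finset α) : Finset α :=
  M.E.filter fun x => M.rk (insert x S) = M.rk S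

/-- The rank function of the free extension `M + e`. -/
def freeExtRk (M : FinMatroid α) (e : α) (S : Finset α) : ℕ :=
  if e ∈ S then
    (if M.cl (S.erase e) = M.E then M.rk (S.erase e) else M.rk (S.erase e) + 1)
  else M.rk S

/-- The free extension `M + e`, realized as the truncation of `M ⊕ U_{1,1}`. -/
def freeExtension (M : FinMatroid α) (e : α) (he : e ∉ M.E) : FinMatroid α :=
  truncation (M.directSum (freeM {e}) (Finset.disjoint_singleton_right.mpr he))

/-- Predicate expressing that `Z` is the (combinatorial) topological zeta function:
`Z` of the trivial matroid is `1` and `Z` satisfies the defining recurrence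
`Z_M(s) = (1/(|E|s + rk M)) ∑_{F proper flat} χ̄_{M/F}(1) ⬝ Z_{M|F}(s)`. -/
def IsTopZeta (Z : FinMatroid α → RatFunc ℚ) : Prop :=
  (∀ M : FinMatroid α, M.E = ∅ → Z M = 1) ∧
  (∀ M : FinMatroid α, M.E.Nonempty →
    Z M = (∑ F ∈ M.properFlats,
        RatFunc.C (M.redCharContractOne F) * Z (M.restrict F)) /
      ((M.E.card : RatFunc ℚ) * RatFunc.X + (M.rk M.E : RatFunc ℚ)))

/-- Predicate expressing that `μ M F` is the Möbius function value `μ(F, E)` in the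
lattice of flats of `M`: for every flat `F`, `∑_{G flat, F ⊆ G} μ(G,E) = δ_{F,E}`. -/
def IsFlatMobius (μ : FinMatroid α → Finset α → ℤ) : Prop :=
  ∀ (M : FinMatroid α) (F : Finset α), M.IsFlat F →
    (∑ G ∈ M.flats.filter fun G => F ⊆ G, μ M G) = if F = M.E then 1 else 0

/-- Predicate expressing that `Y` is the Möbius inversion of `Z`:
`Y_M(s) = ∑_{F ∈ L(M)} μ(F,E) Z_{M|F}(s)`. -/
def IsMobiusInv (μ : FinMatroid α → Finset α → ℤ)
    (Z Y : FinMatroid α → RatFunc ℚ) : Prop :=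
  ∀ M : FinMatroid α, Y M = ∑ F ∈ M.flats, (μ M F : RatFunc ℚ) * Z (M.restrict F)

/-- Predicate expressing that `Z` is the topological zeta function, viewed as an actual
function `ℝ → ℝ` (away from poles): base case `1` for the trivial matroid, and the
defining recurrence pointwise. -/
def IsTopZetaFun (Z : FinMatroid α → ℝ → ℝ) : Prop :=
  (∀ M : FinMatroid α, M.E = ∅ → Z M = fun _ => 1) ∧
  (∀ M : FinMatroid α, M.E.Nonempty → ∀ s : ℝ,
    Z M s = (∑ F ∈ M.properFlats, (M.redCharContractOne F : ℝ) * Z (M.restrict F) s) /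
      ((M.E.card : ℝ) * s + (M.rk M.E : ℝ)))

end FinMatroid

namespace FinMatroid

variable {α : Type*} [DecidableEq α] (M : FinMatroid α)

lemma rk_insert_le (x : α) (S : Finset α) : M.rk (insert x S) ≤ M.rk S + 1 := by
  have h := M.rk_submod {x} S
  have h1 : M.rk {x} ≤ 1 := by simpa using M.rk_le_card {x}
  have h2 : ({x} : Finset α) ∪ S = insert x S := by ext y; simp [or_comm]
  rw [h2] at h
  omega

lemma rk_insert_eq_of_subset {S T : Finset α} {x : α} (hST : S ⊆ T)
    (h : M.rk (insert x S) = M.rk S) : M.rk (insert x T) = M.rk T := by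
  have hs := M.rk_submod (insert x S) T
  have h1 : insert x S ∪ T = insert x T := by
    ext y; simp only [Finset.mem_union, Finset.mem_insert]
    constructor
    · rintro (⟨rfl | hy⟩ | hy); exacts [Or.inl rfl, Or.inr (hST hy), Or.inr hy]
    · rintro (rfl | hy); exacts [Or.inl (Or.inl rfl), Or.inr hy]
  have h2 : S ⊆ insert x S ∩ T := fun y hy =>
    Finset.mem_inter.2 ⟨Finset.mem_insert_of_mem hy, hST hy⟩
  have h3 := M.rk_mono h2
  have h4 := M.rk_mono (Finset.subset_insert x T)
  rw [h1] at hs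
  omega

lemma rk_union_eq {S T : Finset α} (h : ∀ x ∈ T, M.rk (insert x S) = M.rk S) :
    M.rk (S ∪ T) = M.rk S := by
  classical
  induction T using Finset.induction_on with
  | empty => simp
  | @insert a T ha ih =>
    have h1 : S ∪ insert a T = insert a (S ∪ T) := by
      ext y; simp only [Finset.mem_union, Finset.mem_insert]; tauto
    have h2 : M.rk (S ∪ T) = M.rk S := ih fun x hx => h x (Finset.mem_insert_of_mem hx)
    rw [h1]
    rw [M.rk_insert_eq_of_subset Finset.subset_union_left
      (h a (Finset.mem_insert_self a T)), h2]

lemma subset_cl {S : Finset α} (hS : S ⊆ M.E) : S ⊆ M.cl S := by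
  intro x hx
  simp only [cl, Finset.mem_filter]
  exact ⟨hS hx, by rw [Finset.insert_eq_self.2 hx]⟩

lemma cl_subset_ground (S : Finset α) : M.cl S ⊆ M.E := Finset.filter_subset _ _

lemma rk_cl {S : Finset α} (hS : S ⊆ M.E) : M.rk (M.cl S) = M.rk S := by
  have h1 : M.rk (S ∪ M.cl S) = M.rk S := by
    apply M.rk_union_eq
    intro x hx
    exact (Finset.mem_filter.1 hx).2
  rwa [Finset.union_eq_right.2 (M.subset_cl hS)] at h1

lemma cl_isFlat {S : Finset α} (hS : S ⊆ M.E) : M.IsFlat (M.cl S) := by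
  refine ⟨M.cl_subset_ground S, fun x hx hxn => ?_⟩
  rcases lt_or_eq_of_le (M.rk_mono (Finset.subset_insert x (M.cl S))) with h | h
  · exact h
  exfalso
  apply hxn
  have hins : M.rk (insert x S) = M.rk S := by
    have h2 : insert x S ⊆ insert x (M.cl S) :=
      Finset.insert_subset_insert _ (M.subset_cl hS)
    have h3 := M.rk_mono h2
    have h4 := M.rk_mono (Finset.subset_insert x S)
    rw [← h, M.rk_cl hS] at h3
    omega
  exact Finset.mem_filter.2 ⟨hx, hins⟩

lemma IsFlat.cl_eq {M : FinMatroid α} {F : Finset α} (hF : M.IsFlat F) : M.cl F = F := by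
  refine Finset.Subset.antisymm ?_ (M.subset_cl hF.1)
  intro x hx
  rcases Finset.mem_filter.1 hx with ⟨hxE, hrk⟩
  by_contra hxF
  exact absurd hrk (Nat.ne_of_gt (hF.2 x hxE hxF))

lemma cl_subset_flat {S G : Finset α} (hSG : S ⊆ G) (hG : M.IsFlat G) :
    M.cl S ⊆ G := by
  intro x hx
  rcases Finset.mem_filter.1 hx with ⟨hxE, hrk⟩
  have := M.rk_insert_eq_of_subset hSG hrk
  rw [← hG.cl_eq]
  exact Finset.mem_filter.2 ⟨hxE, this⟩

lemma mem_flats {F : Finset α} : F ∈ M.flats ↔ M.IsFlat F := by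
  simp only [flats, Finset.mem_filter, Finset.mem_powerset]
  exact ⟨fun h => h.2, fun h => ⟨h.1, h⟩⟩

lemma isFlat_ground : M.IsFlat M.E := ⟨subset_rfl, fun x hx hxn => absurd hx hxn⟩

lemma isFlat_empty (hL : M.Loopless) : M.IsFlat (∅ : Finset α) := by
  refine ⟨Finset.empty_subset _, fun x hx _ => ?_⟩
  rw [M.rk_empty]
  have : M.rk (insert x ∅) = 1 := by simpa using hL x hx
  omega

@[simp] lemma restrict_E (F : Finset α) : (M.restrict F).E = F := rfl
@[simp] lemma restrict_rk (F S : Finset α) : (M.restrict F).rk S = M.rk S := rfl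

lemma restrict_ground : M.restrict M.E = M := rfl

lemma restrict_restrict (F G : Finset α) :
    (M.restrict G).restrict F = M.restrict F := rfl

lemma isFlat_restrict_iff {G : Finset α} (hG : M.IsFlat G) {F : Finset α} :
    (M.restrict G).IsFlat F ↔ M.IsFlat F ∧ F ⊆ G := by
  constructor
  · rintro ⟨hFG, hF⟩
    refine ⟨⟨hFG.trans hG.1, fun x hxE hxF => ?_⟩, hFG⟩
    by_cases hxG : x ∈ G
    · exact hF x hxG hxF
    · rcases lt_or_eq_of_le (M.rk_mono (Finset.subset_insert x F)) with h | h
      · exact h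
      exfalso
      apply hxG
      apply M.cl_subset_flat hFG hG
      exact Finset.mem_filter.2 ⟨hxE, h.symm⟩
  · rintro ⟨hF, hFG⟩
    exact ⟨hFG, fun x hxG hxF => hF.2 x (hG.1 hxG) hxF⟩

lemma restrict_flats {G : Finset α} (hG : M.IsFlat G) :
    (M.restrict G).flats = M.flats.filter (· ⊆ G) := by
  ext F
  simp only [mem_flats, Finset.mem_filter, mem_flats, isFlat_restrict_iff M hG]

lemma loopless_restrict {G : Finset α} (hG : G ⊆ M.E) (hL : M.Loopless) :
    (M.restrict G).Loopless := fun x hx => hL x (hG hx)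

end FinMatroid
namespace FinMatroid

variable {α : Type*} [DecidableEq α] (M : FinMatroid α)

/-- Whitney's sum: `W M F G = ∑_{S ⊆ G \ F, cl(S ∪ F) = G} (-1)^{|S|}`. -/
noncomputable def Wfun (F G : Finset α) : ℤ :=
  ∑ S ∈ (G \ F).powerset.filter (fun S => M.cl (S ∪ F) = G), (-1 : ℤ) ^ S.card

lemma interval_filter {F G : Finset α} (hF : M.IsFlat F) (hG : M.IsFlat G)
    (hFG : F ⊆ G) :
    ∀ S ∈ (G \ F).powerset, M.cl (S ∪ F) ∈ M.flats.filter (fun G' => F ⊆ G' ∧ G' ⊆ G) := by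
  intro S hS
  rw [Finset.mem_powerset] at hS
  have hSG : S ∪ F ⊆ G := Finset.union_subset (hS.trans Finset.sdiff_subset) hFG
  have hSE : S ∪ F ⊆ M.E := hSG.trans hG.1
  refine Finset.mem_filter.2 ⟨(M.mem_flats).2 (M.cl_isFlat hSE), ?_, ?_⟩
  · exact Finset.subset_union_right.trans (M.subset_cl hSE)
  · exact M.cl_subset_flat hSG hG

lemma Wfun_fiber {F G G' : Finset α} (hF : M.IsFlat F) (hFG : F ⊆ G)
    (hGE : G ⊆ M.E) (hG' : G' ⊆ G) :
    M.Wfun F G' = ∑ S ∈ (G \ F).powerset.filter (fun S => M.cl (S ∪ F) = G'),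
      (-1 : ℤ) ^ S.card := by
  apply Finset.sum_congr _ (fun _ _ => rfl)
  ext S
  simp only [Finset.mem_filter, Finset.mem_powerset]
  constructor
  · rintro ⟨hS, hcl⟩
    exact ⟨hS.trans (Finset.sdiff_subset_sdiff hG' subset_rfl), hcl⟩
  · rintro ⟨hS, hcl⟩
    refine ⟨fun x hx => ?_, hcl⟩
    have hx1 : x ∈ M.cl (S ∪ F) := by
      have hSE : S ∪ F ⊆ M.E :=
        Finset.union_subset ((hS.trans (Finset.sdiff_subset : G \ F ⊆ G)).trans hGE) hF.1
      exact M.subset_cl hSE (Finset.mem_union_left _ hx)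
    rw [hcl] at hx1
    exact Finset.mem_sdiff.2 ⟨hx1, (Finset.mem_sdiff.1 (hS hx)).2⟩

lemma tri_W {F G : Finset α} (hF : M.IsFlat F) (hG : M.IsFlat G) (hFG : F ⊆ G) :
    ∑ G' ∈ M.flats.filter (fun G' => F ⊆ G' ∧ G' ⊆ G), M.Wfun F G' =
      if F = G then 1 else 0 := by
  have key := Finset.sum_fiberwise_of_maps_to (M.interval_filter hF hG hFG)
    (fun S : Finset α => (-1 : ℤ) ^ S.card)
  have h1 : ∀ G' ∈ M.flats.filter (fun G' => F ⊆ G' ∧ G' ⊆ G),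
      M.Wfun F G' = ∑ S ∈ (G \ F).powerset.filter (fun S => M.cl (S ∪ F) = G'),
        (-1 : ℤ) ^ S.card := by
    intro G' hG'
    exact M.Wfun_fiber hF hFG hG.1 (Finset.mem_filter.1 hG').2.2
  rw [Finset.sum_congr rfl h1, key, Finset.sum_powerset_neg_one_pow_card]
  have he : G \ F = ∅ ↔ F = G := by
    rw [Finset.sdiff_eq_empty_iff_subset]
    exact ⟨fun h => Finset.Subset.antisymm hFG h, fun h => h ▸ subset_rfl⟩
  simp only [he]

end FinMatroid
namespace FinMatroid

variable {α : Type*} [DecidableEq α] (M : FinMatroid α)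
variable {μ : FinMatroid α → Finset α → ℤ} (hμ : IsFlatMobius μ)

include hμ in
/-- The Möbius sum over an interval `[F,G]` of the lattice of flats. -/
lemma mu_sum {F G : Finset α} (hF : M.IsFlat F) (hG : M.IsFlat G) (hFG : F ⊆ G) :
    ∑ G' ∈ M.flats.filter (fun G' => F ⊆ G' ∧ G' ⊆ G), μ (M.restrict G) G' =
      if F = G then 1 else 0 := by
  have h1 := hμ (M.restrict G) F ((M.isFlat_restrict_iff hG).2 ⟨hF, hFG⟩)
  rw [M.restrict_flats hG] at h1
  rw [Finset.filter_filter] at h1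
  rw [show (M.restrict G).E = G from rfl] at h1
  rw [← h1]
  apply Finset.sum_congr _ (fun _ _ => rfl)
  apply Finset.filter_congr
  intro x _
  exact and_comm

include hμ in
lemma W_eq_mu {F G : Finset α} (hF : M.IsFlat F) (hG : M.IsFlat G) (hFG : F ⊆ G) :
    M.Wfun F G = μ (M.restrict G) F := by
  classical
  symm
  have hFmem : F ∈ M.flats.filter (fun G' => F ⊆ G' ∧ G' ⊆ G) :=
    Finset.mem_filter.2 ⟨(M.mem_flats).2 hF, subset_rfl, hFG⟩
  have hGmem : G ∈ M.flats.filter (fun G' => F ⊆ G' ∧ G' ⊆ G) :=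
    Finset.mem_filter.2 ⟨(M.mem_flats).2 hG, hFG, subset_rfl⟩
  calc μ (M.restrict G) F
      = ∑ G' ∈ M.flats.filter (fun G' => F ⊆ G' ∧ G' ⊆ G),
          (if F = G' then 1 else 0) * μ (M.restrict G) G' := by
        rw [Finset.sum_eq_single_of_mem F hFmem
          (fun b _ hb => by rw [if_neg (fun h => hb h.symm), zero_mul]),
          if_pos rfl, one_mul]
    _ = ∑ G' ∈ M.flats.filter (fun G' => F ⊆ G' ∧ G' ⊆ G),
          (∑ G'' ∈ M.flats.filter (fun G'' => F ⊆ G'' ∧ G'' ⊆ G'), M.Wfun F G'') *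
            μ (M.restrict G) G' := by
        apply Finset.sum_congr rfl
        intro G' hG'
        rcases Finset.mem_filter.1 hG' with ⟨hm, hFG', _⟩
        rw [M.tri_W hF ((M.mem_flats).1 hm) hFG']
    _ = ∑ G' ∈ M.flats.filter (fun G' => F ⊆ G' ∧ G' ⊆ G),
          ∑ G'' ∈ M.flats.filter (fun G'' => F ⊆ G'' ∧ G'' ⊆ G),
            (if G'' ⊆ G' then M.Wfun F G'' * μ (M.restrict G) G' else 0) := by
        apply Finset.sum_congr rfl
        intro G' hG'
        rcases Finset.mem_filter.1 hG' with ⟨hm, hFG', hG'G⟩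
        rw [← Finset.sum_filter, Finset.filter_filter, ← Finset.sum_mul]
        congr 2
        apply Finset.filter_congr
        intro x _
        constructor
        · rintro ⟨h1, h3⟩; exact ⟨⟨h1, h3.trans hG'G⟩, h3⟩
        · rintro ⟨⟨h1, _⟩, h3⟩; exact ⟨h1, h3⟩
    _ = ∑ G'' ∈ M.flats.filter (fun G'' => F ⊆ G'' ∧ G'' ⊆ G),
          ∑ G' ∈ M.flats.filter (fun G' => F ⊆ G' ∧ G' ⊆ G),
            (if G'' ⊆ G' then M.Wfun F G'' * μ (M.restrict G) G' else 0) :=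
        Finset.sum_comm
    _ = ∑ G'' ∈ M.flats.filter (fun G'' => F ⊆ G'' ∧ G'' ⊆ G),
          M.Wfun F G'' *
            ∑ G' ∈ M.flats.filter (fun G' => G'' ⊆ G' ∧ G' ⊆ G), μ (M.restrict G) G' := by
        apply Finset.sum_congr rfl
        intro G'' hG''
        rcases Finset.mem_filter.1 hG'' with ⟨hm, hFG'', hG''G⟩
        rw [← Finset.sum_filter, Finset.filter_filter, Finset.mul_sum]
        congr 1
        apply Finset.filter_congr
        intro x _
        constructor
        · rintro ⟨⟨_, h3⟩, h1⟩; exact ⟨h1, h3⟩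
        · rintro ⟨h1, h3⟩; exact ⟨⟨hFG''.trans h1, h3⟩, h1⟩
    _ = ∑ G'' ∈ M.flats.filter (fun G'' => F ⊆ G'' ∧ G'' ⊆ G),
          M.Wfun F G'' * (if G'' = G then 1 else 0) := by
        apply Finset.sum_congr rfl
        intro G'' hG''
        rcases Finset.mem_filter.1 hG'' with ⟨hm, _, hG''G⟩
        rw [mu_sum M hμ ((M.mem_flats).1 hm) hG hG''G]
    _ = M.Wfun F G := by
        rw [Finset.sum_eq_single_of_mem G hGmem
          (fun b _ hb => by rw [if_neg hb, mul_zero]), if_pos rfl, mul_one]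

end FinMatroid
namespace FinMatroid

variable {α : Type*} [DecidableEq α] (M : FinMatroid α)

lemma contractCharPoly_eq {F : Finset α} (hF : M.IsFlat F) :
    M.contractCharPoly F = ∑ G ∈ M.flats.filter (fun G => F ⊆ G ∧ G ⊆ M.E),
      (M.Wfun F G : Polynomial ℚ) * Polynomial.X ^ (M.rk M.E - M.rk G) := by
  classical
  unfold contractCharPoly charPolyAux
  have hEr : (M.E \ F) ∪ F = M.E := Finset.sdiff_union_of_subset hF.1
  have hexp : ∀ S ∈ (M.E \ F).powerset,
      (M.rk ((M.E \ F) ∪ F) - M.rk F) - (M.rk (S ∪ F) - M.rk F)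
        = M.rk M.E - M.rk (S ∪ F) := by
    intro S hS
    rw [Finset.mem_powerset] at hS
    have h1 : S ∪ F ⊆ M.E :=
      Finset.union_subset (hS.trans Finset.sdiff_subset) hF.1
    have h2 := M.rk_mono h1
    have h3 : F ⊆ S ∪ F := Finset.subset_union_right
    have h4 := M.rk_mono h3
    rw [hEr]
    omega
  rw [Finset.sum_congr rfl (fun S hS => by rw [hexp S hS])]
  rw [← Finset.sum_fiberwise_of_maps_to (M.interval_filter hF M.isFlat_ground hF.1)
    (fun S => (-1 : Polynomial ℚ) ^ S.card * Polynomial.X ^ (M.rk M.E - M.rk (S ∪ F)))]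
  apply Finset.sum_congr rfl
  intro G hG
  rcases Finset.mem_filter.1 hG with ⟨hm, hFG, hGE⟩
  have hWf := M.Wfun_fiber hF hF.1 subset_rfl hGE (G := M.E) (G' := G)
  have hrkG : ∀ S ∈ (M.E \ F).powerset.filter (fun S => M.cl (S ∪ F) = G),
      M.rk (S ∪ F) = M.rk G := by
    intro S hS
    rcases Finset.mem_filter.1 hS with ⟨hS1, hS2⟩
    rw [Finset.mem_powerset] at hS1
    have h1 : S ∪ F ⊆ M.E :=
      Finset.union_subset (hS1.trans Finset.sdiff_subset) hF.1
    rw [← hS2, M.rk_cl h1]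
  rw [Finset.sum_congr rfl (fun S hS => by rw [hrkG S hS]), ← Finset.sum_mul]
  congr 1
  rw [hWf]
  push_cast
  rfl

lemma redCharContractOne_eq {F : Finset α} (hF : M.IsFlat F) (hFE : F ≠ M.E) :
    M.redCharContractOne F = ∑ G ∈ M.flats.filter (fun G => F ⊆ G ∧ G ⊆ M.E),
      (M.Wfun F G : ℚ) * ((M.rk M.E - M.rk G : ℕ) : ℚ) := by
  classical
  have hsum : ∑ G ∈ M.flats.filter (fun G => F ⊆ G ∧ G ⊆ M.E), M.Wfun F G = 0 := by
    rw [M.tri_W hF M.isFlat_ground hF.1, if_neg hFE]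
  set T : Polynomial ℚ := ∑ G ∈ M.flats.filter (fun G => F ⊆ G ∧ G ⊆ M.E),
    (M.Wfun F G : Polynomial ℚ) *
      (∑ i ∈ Finset.range (M.rk M.E - M.rk G), Polynomial.X ^ i) with hT
  have hfac : M.contractCharPoly F = (Polynomial.X - Polynomial.C 1) * T := by
    rw [M.contractCharPoly_eq hF, hT, Finset.mul_sum]
    have : ∀ G ∈ M.flats.filter (fun G => F ⊆ G ∧ G ⊆ M.E),
        (Polynomial.X - Polynomial.C 1) * ((M.Wfun F G : Polynomial ℚ) *
          (∑ i ∈ Finset.range (M.rk M.E - M.rk G), Polynomial.X ^ i))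
        = (M.Wfun F G : Polynomial ℚ) * Polynomial.X ^ (M.rk M.E - M.rk G)
          - (M.Wfun F G : Polynomial ℚ) := by
      intro G _
      have h := geom_sum_mul (Polynomial.X : Polynomial ℚ) (M.rk M.E - M.rk G)
      rw [Polynomial.C_1]
      linear_combination (M.Wfun F G : Polynomial ℚ) * h
    rw [Finset.sum_congr rfl this, Finset.sum_sub_distrib]
    have hz : ∑ G ∈ M.flats.filter (fun G => F ⊆ G ∧ G ⊆ M.E),
        (M.Wfun F G : Polynomial ℚ) = 0 := by
      rw [← Int.cast_sum, hsum, Int.cast_zero]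
    rw [hz, sub_zero]
  unfold redCharContractOne reducedCharPoly
  rw [hfac, mul_divByMonic_cancel_left T (Polynomial.monic_X_sub_C 1), hT]
  rw [Polynomial.eval_finset_sum]
  apply Finset.sum_congr rfl
  intro G _
  rw [Polynomial.eval_mul, Polynomial.eval_finset_sum]
  simp

end FinMatroid
namespace FinMatroid

variable {α : Type*} [DecidableEq α] (M : FinMatroid α)
variable {μ : FinMatroid α → Finset α → ℤ} {Z Y : FinMatroid α → RatFunc ℚ}

lemma D_ne_zero {n r : ℕ} (hn : n ≠ 0) :
    (n : RatFunc ℚ) * RatFunc.X + (r : RatFunc ℚ) ≠ 0 := by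
  have hp : ((n : Polynomial ℚ) * Polynomial.X + (r : Polynomial ℚ)) ≠ 0 := by
    intro h
    have := congrArg (fun p => Polynomial.coeff p 1) h
    simp [Polynomial.coeff_natCast_ite] at this
    exact hn this
  have h2 := RatFunc.algebraMap_ne_zero hp
  have he : (algebraMap (Polynomial ℚ) (RatFunc ℚ))
      ((n : Polynomial ℚ) * Polynomial.X + (r : Polynomial ℚ)) =
        (n : RatFunc ℚ) * RatFunc.X + (r : RatFunc ℚ) := by
    rw [map_add, map_mul, RatFunc.algebraMap_X, map_natCast, map_natCast]
  rw [← he]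
  exact h2

lemma filter_ground_eq {F : Finset α} (hF : M.IsFlat F) :
    M.flats.filter (fun G => F ⊆ G ∧ G ⊆ M.E) = M.flats.filter (fun G => F ⊆ G) := by
  apply Finset.filter_congr
  intro G hG
  have := ((M.mem_flats).1 hG).1
  simp only [and_iff_left_iff_imp]
  exact fun _ => this

lemma mu_ground (hμ : IsFlatMobius μ) : μ M M.E = 1 := by
  have h := hμ M M.E M.isFlat_ground
  rw [if_pos rfl] at h
  have hset : M.flats.filter (fun G => M.E ⊆ G) = {M.E} := by
    ext G
    simp only [Finset.mem_filter, Finset.mem_singleton, mem_flats]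
    constructor
    · rintro ⟨hG, hEG⟩; exact Finset.Subset.antisymm hG.1 hEG
    · rintro rfl; exact ⟨M.isFlat_ground, subset_rfl⟩
  rw [hset, Finset.sum_singleton] at h
  exact h

/-- The key coefficient identity. -/
lemma coef_identity (hμ : IsFlatMobius μ) {G : Finset α} (hG : M.IsFlat G)
    (hGE : G ≠ M.E) :
    RatFunc.C (M.redCharContractOne G) =
      -∑ P ∈ M.flats.filter (fun P => G ⊆ P),
        (((M.E.card : RatFunc ℚ) * RatFunc.X + (M.rk P : RatFunc ℚ)) *
          ((μ (M.restrict P) G : ℤ) : RatFunc ℚ)) := by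
  classical
  have hmem : ∀ P ∈ M.flats.filter (fun P => G ⊆ P), M.IsFlat P ∧ G ⊆ P := by
    intro P hP
    rcases Finset.mem_filter.1 hP with ⟨h1, h2⟩
    exact ⟨(M.mem_flats).1 h1, h2⟩
  have hWm : ∀ P ∈ M.flats.filter (fun P => G ⊆ P),
      M.Wfun G P = μ (M.restrict P) G := by
    intro P hP
    exact W_eq_mu M hμ hG (hmem P hP).1 (hmem P hP).2
  have hz : ∑ P ∈ M.flats.filter (fun P => G ⊆ P),
      ((μ (M.restrict P) G : ℤ) : RatFunc ℚ) = 0 := by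
    rw [← Finset.sum_congr rfl (fun P hP => by rw [← hWm P hP])]
    rw [← Int.cast_sum]
    have h := M.tri_W hG M.isFlat_ground hG.1
    rw [M.filter_ground_eq hG] at h
    rw [h, if_neg hGE, Int.cast_zero]
  rw [M.redCharContractOne_eq hG hGE, M.filter_ground_eq hG, map_sum]
  have hterm : ∀ P ∈ M.flats.filter (fun P => G ⊆ P),
      RatFunc.C ((M.Wfun G P : ℚ) * ((M.rk M.E - M.rk P : ℕ) : ℚ))
        = ((μ (M.restrict P) G : ℤ) : RatFunc ℚ) *
            ((M.rk M.E : RatFunc ℚ) - (M.rk P : RatFunc ℚ)) := by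
    intro P hP
    have hle : M.rk P ≤ M.rk M.E := M.rk_mono (hmem P hP).1.1
    rw [map_mul, map_intCast, map_natCast, hWm P hP, Nat.cast_sub hle]
  rw [Finset.sum_congr rfl hterm]
  rw [Finset.sum_congr rfl (fun P hP => (by ring :
    ((μ (M.restrict P) G : ℤ) : RatFunc ℚ) *
        ((M.rk M.E : RatFunc ℚ) - (M.rk P : RatFunc ℚ)) =
      ((M.E.card : RatFunc ℚ) * RatFunc.X + (M.rk M.E : RatFunc ℚ)) *
          ((μ (M.restrict P) G : ℤ) : RatFunc ℚ) -
        ((M.E.card : RatFunc ℚ) * RatFunc.X + (M.rk P : RatFunc ℚ)) *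
          ((μ (M.restrict P) G : ℤ) : RatFunc ℚ)))]
  rw [Finset.sum_sub_distrib, ← Finset.mul_sum, hz, mul_zero, zero_sub]

end FinMatroid
namespace FinMatroid

variable {α : Type*} [DecidableEq α] (M : FinMatroid α)
variable {μ : FinMatroid α → Finset α → ℤ} {Z Y : FinMatroid α → RatFunc ℚ}

lemma properFlats_eq : M.properFlats = M.flats.erase M.E := Finset.filter_ne' _ _

lemma mem_properFlats {P : Finset α} :
    P ∈ M.properFlats ↔ M.IsFlat P ∧ P ≠ M.E := by
  rw [properFlats_eq, Finset.mem_erase, mem_flats, and_comm]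

lemma Y_recurrence (hZ : IsTopZeta Z) (hμ : IsFlatMobius μ) (hY : IsMobiusInv μ Z Y)
    (hE : M.E.Nonempty) :
    Y M = ∑ P ∈ M.properFlats,
      -(((M.E.card : RatFunc ℚ) * RatFunc.X + (M.rk P : RatFunc ℚ)) /
          ((M.E.card : RatFunc ℚ) * RatFunc.X + (M.rk M.E : RatFunc ℚ))) *
        Y (M.restrict P) := by
  classical
  set D : RatFunc ℚ := (M.E.card : RatFunc ℚ) * RatFunc.X + (M.rk M.E : RatFunc ℚ)
    with hD_def
  have hD : D ≠ 0 := D_ne_zero (Finset.card_ne_zero_of_mem hE.choose_spec)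
  have hrhs : ∑ P ∈ M.properFlats,
      -(((M.E.card : RatFunc ℚ) * RatFunc.X + (M.rk P : RatFunc ℚ)) / D) *
        Y (M.restrict P)
      = (∑ P ∈ M.properFlats,
          -(((M.E.card : RatFunc ℚ) * RatFunc.X + (M.rk P : RatFunc ℚ)) *
            Y (M.restrict P))) / D := by
    rw [Finset.sum_div]
    apply Finset.sum_congr rfl
    intro P _
    field_simp
  rw [hrhs, eq_div_iff hD]
  -- LHS : Y M * D
  have hYM := hY M
  have hEflats : M.E ∈ M.flats := (M.mem_flats).2 M.isFlat_ground
  have hsplit := Finset.sum_erase_add M.flats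
    (fun F => (μ M F : RatFunc ℚ) * Z (M.restrict F)) hEflats
  rw [← hsplit, ← M.properFlats_eq] at hYM
  simp only [mu_ground M hμ, Int.cast_one, one_mul, M.restrict_ground] at hYM
  have hZM := hZ.2 M hE
  rw [← hD_def] at hZM
  have hlhs : Y M * D = ∑ P ∈ M.properFlats,
      ((μ M P : RatFunc ℚ) * D + RatFunc.C (M.redCharContractOne P)) *
        Z (M.restrict P) := by
    rw [hYM, add_mul, hZM, div_mul_cancel₀ _ hD,
      Finset.sum_mul, ← Finset.sum_add_distrib]
    apply Finset.sum_congr rfl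
    intro P _
    ring
  rw [hlhs]
  -- RHS : expand Y (M.restrict P) and swap
  have hYP : ∀ P ∈ M.properFlats,
      Y (M.restrict P) = ∑ G ∈ M.flats.filter (fun G => G ⊆ P),
        (μ (M.restrict P) G : RatFunc ℚ) * Z (M.restrict G) := by
    intro P hP
    have hPflat := ((M.mem_properFlats).1 hP).1
    have := hY (M.restrict P)
    rw [M.restrict_flats hPflat] at this
    simpa only [restrict_restrict] using this
  conv_rhs => rw [Finset.sum_congr rfl (fun P hP => by rw [hYP P hP])]
  -- turn into double sum with indicator and swap
  have hswap : ∑ P ∈ M.properFlats,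
      -(((M.E.card : RatFunc ℚ) * RatFunc.X + (M.rk P : RatFunc ℚ)) *
        ∑ G ∈ M.flats.filter (fun G => G ⊆ P),
          (μ (M.restrict P) G : RatFunc ℚ) * Z (M.restrict G))
      = ∑ G ∈ M.flats, ∑ P ∈ M.properFlats.filter (fun P => G ⊆ P),
          -(((M.E.card : RatFunc ℚ) * RatFunc.X + (M.rk P : RatFunc ℚ)) *
            ((μ (M.restrict P) G : RatFunc ℚ) * Z (M.restrict G))) := by
    have h1 : ∀ P ∈ M.properFlats,
        -(((M.E.card : RatFunc ℚ) * RatFunc.X + (M.rk P : RatFunc ℚ)) *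
          ∑ G ∈ M.flats.filter (fun G => G ⊆ P),
            (μ (M.restrict P) G : RatFunc ℚ) * Z (M.restrict G))
        = ∑ G ∈ M.flats, (if G ⊆ P then
            -(((M.E.card : RatFunc ℚ) * RatFunc.X + (M.rk P : RatFunc ℚ)) *
              ((μ (M.restrict P) G : RatFunc ℚ) * Z (M.restrict G))) else 0) := by
      intro P _
      rw [← Finset.sum_filter, Finset.mul_sum, neg_eq_iff_eq_neg, ← Finset.sum_neg_distrib]
      apply Finset.sum_congr rfl
      intro G _
      ring
    rw [Finset.sum_congr rfl h1, Finset.sum_comm]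
    apply Finset.sum_congr rfl
    intro G _
    rw [Finset.sum_filter]
  rw [hswap]
  -- now match coefficients
  rw [← Finset.sum_erase_add M.flats _ hEflats, ← M.properFlats_eq]
  have hEterm : M.properFlats.filter (fun P => M.E ⊆ P) = ∅ := by
    apply Finset.filter_false_of_mem
    intro P hP
    rcases (M.mem_properFlats).1 hP with ⟨hPf, hPne⟩
    intro hEP
    exact hPne (Finset.Subset.antisymm hPf.1 hEP)
  rw [hEterm, Finset.sum_empty, add_zero]
  apply Finset.sum_congr rfl
  intro G hG
  rcases (M.mem_properFlats).1 hG with ⟨hGflat, hGne⟩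
  have hcoef := M.coef_identity hμ hGflat hGne
  have hfilterE : M.E ∈ M.flats.filter (fun P => G ⊆ P) :=
    Finset.mem_filter.2 ⟨hEflats, hGflat.1⟩
  have hsplit2 := Finset.sum_erase_add (M.flats.filter (fun P => G ⊆ P))
    (fun P => (((M.E.card : RatFunc ℚ) * RatFunc.X + (M.rk P : RatFunc ℚ)) *
      ((μ (M.restrict P) G : ℤ) : RatFunc ℚ))) hfilterE
  have herase : (M.flats.filter (fun P => G ⊆ P)).erase M.E
      = M.properFlats.filter (fun P => G ⊆ P) := by
    rw [M.properFlats_eq]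
    ext P
    simp only [Finset.mem_erase, Finset.mem_filter]
    tauto
  rw [herase] at hsplit2
  rw [← hsplit2] at hcoef
  simp only [M.restrict_ground] at hcoef
  have hthis : ∑ P ∈ M.properFlats.filter (fun P => G ⊆ P),
      -(((M.E.card : RatFunc ℚ) * RatFunc.X + (M.rk P : RatFunc ℚ)) *
        ((μ (M.restrict P) G : RatFunc ℚ) * Z (M.restrict G)))
      = (∑ P ∈ M.properFlats.filter (fun P => G ⊆ P),
          -(((M.E.card : RatFunc ℚ) * RatFunc.X + (M.rk P : RatFunc ℚ)) *
            ((μ (M.restrict P) G : ℤ) : RatFunc ℚ))) * Z (M.restrict G) := by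
    rw [Finset.sum_mul]
    apply Finset.sum_congr rfl
    intro P _
    ring
  have h2 : ∑ P ∈ M.properFlats.filter (fun P => G ⊆ P),
      -(((M.E.card : RatFunc ℚ) * RatFunc.X + (M.rk P : RatFunc ℚ)) *
        ((μ (M.restrict P) G : ℤ) : RatFunc ℚ))
      = RatFunc.C (M.redCharContractOne G) + D * (μ M G : RatFunc ℚ) := by
    rw [hcoef, Finset.sum_neg_distrib, hD_def]
    ring
  rw [hthis, h2]
  ring

end FinMatroid
namespace FinMatroid

variable {α : Type*} [DecidableEq α]

lemma chain_sup_mem {C : Finset (Finset α)}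
    (hC : IsChain (· ⊆ ·) (↑C : Set (Finset α))) (hne : C.Nonempty) :
    C.sup id ∈ C ∧ ∀ x ∈ C, x ⊆ C.sup id := by
  obtain ⟨m, hm, hmax⟩ := C.exists_maximal hne
  have hall : ∀ x ∈ C, x ⊆ m := by
    intro x hx
    rcases eq_or_ne x m with rfl | hne'
    · exact subset_rfl
    · rcases hC hx hm hne' with h | h
      · exact h
      · exact absurd (Finset.Subset.antisymm (hmax hx h) h) hne'
  have hsup : C.sup id = m := le_antisymm (Finset.sup_le hall) (Finset.le_sup (f := id) hm)
  rw [hsup]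
  exact ⟨hm, hall⟩

/-- The set of flags (maximal-data chains of flats containing `∅` and `E`). -/
noncomputable def flagChains (M : FinMatroid α) : Finset (Finset (Finset α)) :=
  M.E.powerset.powerset.filter (fun C : Finset (Finset α) =>
    ∅ ∈ C ∧ M.E ∈ C ∧ (∀ F ∈ C, M.IsFlat F) ∧
      IsChain (· ⊆ ·) (↑C : Set (Finset α)))

/-- The flag-sum expression. -/
noncomputable def flagSum (M : FinMatroid α) : RatFunc ℚ :=
  ∑ C ∈ M.flagChains,
    ∏ G ∈ C.erase ∅,
      -(((G.card : RatFunc ℚ) * RatFunc.X +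
            (M.rk ((C.filter fun F => F ⊂ G).sup id) : RatFunc ℚ)) /
        ((G.card : RatFunc ℚ) * RatFunc.X + (M.rk G : RatFunc ℚ)))

lemma flagSum_def (M : FinMatroid α) : M.flagSum =
    ∑ C ∈ M.flagChains,
      ∏ G ∈ C.erase ∅,
        -(((G.card : RatFunc ℚ) * RatFunc.X +
              (M.rk ((C.filter fun F => F ⊂ G).sup id) : RatFunc ℚ)) /
          ((G.card : RatFunc ℚ) * RatFunc.X + (M.rk G : RatFunc ℚ))) := rfl

lemma mem_flagChains {M : FinMatroid α} {C : Finset (Finset α)} :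
    C ∈ M.flagChains ↔ (∀ F ∈ C, F ⊆ M.E) ∧ ∅ ∈ C ∧ M.E ∈ C ∧
      (∀ F ∈ C, M.IsFlat F) ∧ IsChain (· ⊆ ·) (↑C : Set (Finset α)) := by
  unfold flagChains
  rw [Finset.mem_filter, Finset.mem_powerset]
  constructor
  · rintro ⟨h1, h2⟩
    exact ⟨fun F hF => Finset.mem_powerset.1 (h1 hF), h2⟩
  · rintro ⟨h1, h2⟩
    exact ⟨fun F hF => Finset.mem_powerset.2 (h1 F hF), h2⟩

lemma flagChains_empty {M : FinMatroid α} (hME : M.E = ∅) :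
    M.flagChains = {{∅}} := by
  ext C
  rw [mem_flagChains, Finset.mem_singleton]
  constructor
  · rintro ⟨hsub, h0, _, _, _⟩
    apply Finset.Subset.antisymm
    · intro x hx
      rw [Finset.mem_singleton]
      have := hsub x hx
      rw [hME, Finset.subset_empty] at this
      exact this
    · exact Finset.singleton_subset_iff.2 h0
  · rintro rfl
    refine ⟨?_, ?_, ?_, ?_, ?_⟩
    · intro F hF
      rw [Finset.mem_singleton] at hF
      subst hF; exact Finset.empty_subset _
    · exact Finset.mem_singleton_self _
    · rw [hME]; exact Finset.mem_singleton_self _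
    · intro F hF
      rw [Finset.mem_singleton] at hF
      subst hF
      refine ⟨Finset.empty_subset _, fun x hx _ => ?_⟩
      rw [hME] at hx
      exact absurd hx (Finset.notMem_empty x)
    · rw [Finset.coe_singleton]
      exact Set.subsingleton_singleton.isChain
lemma flagSum_empty (M : FinMatroid α) (hME : M.E = ∅) : M.flagSum = 1 := by
  rw [flagSum_def, flagChains_empty hME, Finset.sum_singleton, Finset.erase_singleton,
    Finset.prod_empty]

end FinMatroid
namespace FinMatroid

variable {α : Type*} [DecidableEq α]

lemma flagSum_rec (M : FinMatroid α) (hE : M.E.Nonempty) :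
    M.flagSum = ∑ P ∈ M.properFlats,
      -(((M.E.card : RatFunc ℚ) * RatFunc.X + (M.rk P : RatFunc ℚ)) /
          ((M.E.card : RatFunc ℚ) * RatFunc.X + (M.rk M.E : RatFunc ℚ))) *
        (M.restrict P).flagSum := by
  classical
  have hne : (∅ : Finset α) ≠ M.E := by
    intro h; rw [← h] at hE; exact Finset.not_nonempty_empty hE
  have herase_props : ∀ C ∈ M.flagChains,
      (C.erase M.E).sup id ∈ C.erase M.E ∧
        ∀ x ∈ C.erase M.E, x ⊆ (C.erase M.E).sup id := by
    intro C hC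
    rcases mem_flagChains.1 hC with ⟨hsub, h0, hEC, hflat, hchain⟩
    apply chain_sup_mem
    · exact hchain.mono (Finset.coe_subset.2 (Finset.erase_subset _ _))
    · exact ⟨∅, Finset.mem_erase.2 ⟨hne, h0⟩⟩
  have hmaps : ∀ C ∈ M.flagChains, (C.erase M.E).sup id ∈ M.properFlats := by
    intro C hC
    rcases mem_flagChains.1 hC with ⟨hsub, h0, hEC, hflat, hchain⟩
    have h1 := (herase_props C hC).1
    rw [mem_properFlats]
    exact ⟨hflat _ (Finset.mem_of_mem_erase h1), (Finset.mem_erase.1 h1).1⟩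
  conv_lhs => rw [flagSum_def,
    ← Finset.sum_fiberwise_of_maps_to hmaps (fun C => ∏ G ∈ C.erase ∅,
      -(((G.card : RatFunc ℚ) * RatFunc.X +
            (M.rk ((C.filter fun F => F ⊂ G).sup id) : RatFunc ℚ)) /
        ((G.card : RatFunc ℚ) * RatFunc.X + (M.rk G : RatFunc ℚ))))]
  apply Finset.sum_congr rfl
  intro P hP
  rcases (M.mem_properFlats).1 hP with ⟨hPflat, hPne⟩
  rw [flagSum_def, Finset.mul_sum]
  refine Finset.sum_nbij' (fun C => C.erase M.E) (fun C' => insert M.E C')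
    ?_ ?_ ?_ ?_ ?_
  · -- hi
    intro C hC
    rw [Finset.mem_filter] at hC
    obtain ⟨hCmem, hCsup⟩ := hC
    rcases mem_flagChains.1 hCmem with ⟨hsub, h0, hEC, hflat, hchain⟩
    obtain ⟨hsupmem, hsuple⟩ := herase_props C hCmem
    rw [hCsup] at hsupmem hsuple
    rw [mem_flagChains]
    refine ⟨fun F hF => hsuple F hF, Finset.mem_erase.2 ⟨hne, h0⟩, hsupmem, ?_, ?_⟩
    · intro F hF
      rw [M.isFlat_restrict_iff hPflat]
      exact ⟨hflat F (Finset.mem_of_mem_erase hF), hsuple F hF⟩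
    · exact hchain.mono (Finset.coe_subset.2 (Finset.erase_subset _ _))
  · -- hj
    intro C' hC'
    rcases mem_flagChains.1 hC' with ⟨hsub', h0', hPC', hflat', hchain'⟩
    have hEnotin : M.E ∉ C' := fun h =>
      hPne (Finset.Subset.antisymm hPflat.1 (hsub' _ h))
    rw [Finset.mem_filter]
    constructor
    · rw [mem_flagChains]
      refine ⟨?_, Finset.mem_insert_of_mem h0', Finset.mem_insert_self _ _, ?_, ?_⟩
      · intro F hF
        rcases Finset.mem_insert.1 hF with rfl | hF
        · exact subset_rfl
        · exact (hsub' F hF).trans hPflat.1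
      · intro F hF
        rcases Finset.mem_insert.1 hF with rfl | hF
        · exact M.isFlat_ground
        · exact ((M.isFlat_restrict_iff hPflat).1 (hflat' F hF)).1
      · rw [Finset.coe_insert]
        exact hchain'.insert (fun b hb _ =>
          Or.inr ((hsub' b (Finset.mem_coe.1 hb)).trans hPflat.1))
    · rw [Finset.erase_insert hEnotin]
      exact le_antisymm (Finset.sup_le hsub') (Finset.le_sup (f := id) hPC')
  · -- hji
    intro C hC
    rw [Finset.mem_filter] at hC
    exact Finset.insert_erase (mem_flagChains.1 hC.1).2.2.1
  · -- hij
    intro C' hC'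
    rcases mem_flagChains.1 hC' with ⟨hsub', _, _, _, _⟩
    exact Finset.erase_insert (fun h =>
      hPne (Finset.Subset.antisymm hPflat.1 (hsub' _ h)))
  · -- hfg
    intro C hC
    rw [Finset.mem_filter] at hC
    obtain ⟨hCmem, hCsup⟩ := hC
    rcases mem_flagChains.1 hCmem with ⟨hsub, h0, hEC, hflat, hchain⟩
    obtain ⟨hsupmem, hsuple⟩ := herase_props C hCmem
    rw [hCsup] at hsupmem hsuple
    have hEmem0 : M.E ∈ C.erase ∅ := Finset.mem_erase.2 ⟨Ne.symm hne, hEC⟩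
    rw [← Finset.mul_prod_erase (C.erase ∅) _ hEmem0]
    have hfiltE : C.filter (fun F => F ⊂ M.E) = C.erase M.E := by
      ext x
      simp only [Finset.mem_filter, Finset.mem_erase]
      constructor
      · rintro ⟨hx, hss⟩; exact ⟨hss.ne, hx⟩
      · rintro ⟨hxne, hx⟩
        exact ⟨hx, Finset.ssubset_iff_subset_ne.2 ⟨hsub x hx, hxne⟩⟩
    have hswap : (C.erase ∅).erase M.E = (C.erase M.E).erase ∅ :=
      Finset.erase_right_comm
    rw [hfiltE, hCsup, hswap]
    congr 1
    apply Finset.prod_congr rfl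
    intro G hG
    rcases Finset.mem_erase.1 hG with ⟨hGne0, hGmem⟩
    have hGC : G ∈ C := Finset.mem_of_mem_erase hGmem
    have hfilt : C.filter (fun F => F ⊂ G) = (C.erase M.E).filter (fun F => F ⊂ G) := by
      ext x
      simp only [Finset.mem_filter, Finset.mem_erase]
      constructor
      · rintro ⟨hx, hss⟩
        refine ⟨⟨?_, hx⟩, hss⟩
        rintro rfl
        exact absurd (hsub G hGC) hss.2
      · rintro ⟨⟨_, hx⟩, hss⟩; exact ⟨hx, hss⟩
    rw [hfilt]
    rfl

end FinMatroid
namespace FinMatroid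

variable {α : Type*} [DecidableEq α]
variable {μ : FinMatroid α → Finset α → ℤ} {Z Y : FinMatroid α → RatFunc ℚ}

lemma Y_empty (M : FinMatroid α) (hZ : IsTopZeta Z) (hμ : IsFlatMobius μ)
    (hY : IsMobiusInv μ Z Y) (hME : M.E = ∅) : Y M = 1 := by
  have hflat : M.IsFlat ∅ := ⟨Finset.empty_subset _, fun x hx _ => by
    rw [hME] at hx; exact absurd hx (Finset.notMem_empty x)⟩
  have hflats : M.flats = {∅} := by
    ext F
    rw [mem_flats, Finset.mem_singleton]
    constructor
    · intro hF
      have := hF.1; rw [hME, Finset.subset_empty] at this; exact this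
    · rintro rfl; exact hflat
  have hμ1 : μ M ∅ = 1 := by
    have h := hμ M ∅ hflat
    rw [hflats, if_pos hME.symm, Finset.filter_singleton,
      if_pos (Finset.empty_subset _), Finset.sum_singleton] at h
    exact h
  rw [hY M, hflats, Finset.sum_singleton, hμ1, hZ.1 (M.restrict ∅) rfl]
  norm_num

lemma Y_eq_flagSum (hZ : IsTopZeta Z) (hμ : IsFlatMobius μ) (hY : IsMobiusInv μ Z Y) :
    ∀ N : ℕ, ∀ M : FinMatroid α, M.E.card ≤ N → Y M = M.flagSum := by
  intro N
  induction N with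
  | zero =>
    intro M hM
    have hME : M.E = ∅ := Finset.card_eq_zero.1 (Nat.le_zero.1 hM)
    rw [Y_empty M hZ hμ hY hME, flagSum_empty M hME]
  | succ n ih =>
    intro M hM
    rcases eq_or_ne M.E ∅ with hME | hME
    · rw [Y_empty M hZ hμ hY hME, flagSum_empty M hME]
    · have hE : M.E.Nonempty := Finset.nonempty_iff_ne_empty.2 hME
      rw [M.Y_recurrence hZ hμ hY hE, M.flagSum_rec hE]
      apply Finset.sum_congr rfl
      intro P hP
      rcases (M.mem_properFlats).1 hP with ⟨hPflat, hPne⟩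
      congr 1
      apply ih
      have hlt : P.card < M.E.card :=
        Finset.card_lt_card (Finset.ssubset_iff_subset_ne.2 ⟨hPflat.1, hPne⟩)
      have hcard : (M.restrict P).E.card = P.card := rfl
      omega

end FinMatroid

open FinMatroid in
/-- flag formula for the Möbius inversion of the topological zeta
function. Flags `∅ = F₀ ⊊ F₁ ⊊ ⋯ ⊊ F_k = E` are encoded as chains `C` of flats
containing `∅` and `E`; for `G = F_i ∈ C` with `G ≠ ∅`, its predecessor
`F_{i-1}` is the union (`sup`) of the members of `C` strictly contained in `G`. -/
theorem mobiusInv_flag_formula {α : Type*} [DecidableEq α]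
    (Z Y : FinMatroid α → RatFunc ℚ) (μ : FinMatroid α → Finset α → ℤ)
    (hZ : IsTopZeta Z) (hμ : IsFlatMobius μ) (hY : IsMobiusInv μ Z Y)
    (M : FinMatroid α) (hL : M.Loopless) :
    Y M = ∑ C ∈ M.E.powerset.powerset.filter (fun C : Finset (Finset α) =>
        ∅ ∈ C ∧ M.E ∈ C ∧ (∀ F ∈ C, M.IsFlat F) ∧
        IsChain (· ⊆ ·) (↑C : Set (Finset α))),
      ∏ G ∈ C.erase ∅,
        -(((G.card : RatFunc ℚ) * RatFunc.X +
              (M.rk ((C.filter fun F => F ⊂ G).sup id) : RatFunc ℚ)) /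
          ((G.card : RatFunc ℚ) * RatFunc.X + (M.rk G : RatFunc ℚ))) := by
  exact FinMatroid.Y_eq_flagSum hZ hμ hY M.E.card M le_rfl
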